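/- arXiv:1510.08878 — 4 statements merged into one kernel-verified Lean document; each statement's English description precedes it below -/
import Mathlib

section
/- Let X be a real locally convex topological vector space, T : X → X a continuous linear operator, and x ∈ X. Then the convex hull of the orbit Orb(x,T) = {Tⁿx : n ≥ 0} is dense in X if and only if for every nonzero continuous linear functional f on X, the set {f(Tⁿx) : n ≥ 0} is not bounded above (i.e., sup_n f(Tⁿx) = ∞). -/
/-!
If `Tⁿx` has dense convex hull, a continuous functional bounded above by `M` on the orbit is
bounded by `M` on the closed half-space containing the whole hull, hence everywhere, and a linear
functional bounded above vanishes. Conversely, a point outside the closed convex hull of the orbit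
is strictly separated from it by Hahn–Banach, which gives a nonzero functional bounded above
on the orbit.
-/

open Set

theorem LinearMap.eq_zero_of_bddAbove_range {E : Type*} [AddCommGroup E] [Module ℝ E]
    (f : E →ₗ[ℝ] ℝ) (hf : BddAbove (Set.range f)) : f = 0 :=
  f.surjective_or_eq_zero.resolve_left fun hsurj ↦ not_bddAbove_univ (hsurj.range_eq ▸ hf)

section ConvexHull

variable {E : Type*} [TopologicalSpace E] [AddCommGroup E] [Module ℝ E] {s : Set E}

theorem ContinuousLinearMap.eq_zero_of_dense_convexHull_of_bddAbove_image
    (hs : Dense (convexHull ℝ s)) (f : E →L[ℝ] ℝ) (hf : BddAbove (f '' s)) : f = 0 := by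
  obtain ⟨M, hM⟩ := hf
  have hconvex : Convex ℝ (f ⁻¹' Iic M) := convex_Iic M |>.linear_preimage f.toLinearMap
  have hclosed : IsClosed (f ⁻¹' Iic M) := isClosed_Iic.preimage f.continuous
  have hhull : convexHull ℝ s ⊆ f ⁻¹' Iic M :=
    convexHull_min (image_subset_iff.mp (mem_upperBounds_iff_subset_Iic.mp hM)) hconvex
  have hrange : BddAbove (range f) := ⟨M, by
    rintro _ ⟨y, rfl⟩
    exact closure_minimal hhull hclosed (hs y)⟩
  exact ContinuousLinearMap.coe_injective (f.toLinearMap.eq_zero_of_bddAbove_range hrange)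

theorem exists_ne_zero_bddAbove_image_of_not_dense_convexHull [IsTopologicalAddGroup E]
    [ContinuousSMul ℝ E] [LocallyConvexSpace ℝ E] (hs : s.Nonempty)
    (hdense : ¬Dense (convexHull ℝ s)) : ∃ f : E →L[ℝ] ℝ, f ≠ 0 ∧ BddAbove (f '' s) := by
  obtain ⟨y, hy⟩ := not_forall.mp hdense
  obtain ⟨f, u, hfu, huy⟩ :=
    geometric_hahn_banach_closed_point (convex_convexHull ℝ s).closure isClosed_closure hy
  have hbound : ∀ a ∈ s, f a < u := fun a ha ↦
    hfu a (subset_closure (subset_convexHull ℝ s ha))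
  obtain ⟨a, ha⟩ := hs
  refine ⟨f, fun hf ↦ ?_, ⟨u, forall_mem_image.mpr fun a ha ↦ (hbound a ha).le⟩⟩
  have := (hbound a ha).trans huy
  simp [hf] at this

theorem dense_convexHull_iff_forall_ne_zero_not_bddAbove_image [IsTopologicalAddGroup E]
    [ContinuousSMul ℝ E] [LocallyConvexSpace ℝ E] (hs : s.Nonempty) :
    Dense (convexHull ℝ s) ↔ ∀ f : E →L[ℝ] ℝ, f ≠ 0 → ¬BddAbove (f '' s) := by
  refine ⟨fun hdense f hf hbdd ↦ hf (f.eq_zero_of_dense_convexHull_of_bddAbove_image hdense hbdd),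
    fun h ↦ ?_⟩
  by_contra hdense
  obtain ⟨f, hf, hbdd⟩ := exists_ne_zero_bddAbove_image_of_not_dense_convexHull hs hdense
  exact h f hf hbdd

end ConvexHull

theorem hahnBanach_characterization_convexCyclicity_general
    {X : Type*} [AddCommGroup X] [Module ℝ X] [TopologicalSpace X]
    [IsTopologicalAddGroup X] [ContinuousSMul ℝ X] [LocallyConvexSpace ℝ X]
    (T : X →L[ℝ] X) (x : X) :
    Dense (convexHull ℝ (Set.range fun n : ℕ => (T ^ n) x)) ↔
      ∀ f : X →L[ℝ] ℝ, f ≠ 0 → ¬ BddAbove (Set.range fun n : ℕ => f ((T ^ n) x)) := by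
  have horbit : (Set.range fun n : ℕ => (T ^ n) x).Nonempty := range_nonempty _
  simpa only [← range_comp'] using dense_convexHull_iff_forall_ne_zero_not_bddAbove_image horbit

theorem hahnBanach_characterization_convexCyclicity
    {X : Type*} [AddCommGroup X] [Module ℝ X] [TopologicalSpace X]
    [IsTopologicalAddGroup X] [ContinuousSMul ℝ X] [LocallyConvexSpace ℝ X] [T2Space X]
    (T : X →L[ℝ] X) (x : X) :
    Dense (convexHull ℝ (Set.range fun n : ℕ => (T ^ n) x)) ↔
      ∀ f : X →L[ℝ] ℝ, f ≠ 0 → ¬ BddAbove (Set.range fun n : ℕ => f ((T ^ n) x)) :=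
  hahnBanach_characterization_convexCyclicity_general T x
end

section
/- If a < -1, then every point x₀ ∈ [a,-1] is a peak point for the convex-polynomials on [a,-1]; that is, for every x₀ ∈ [a,-1] there exists a convex-polynomial p such that |p(x₀)| > |p(x)| for all x ∈ [a,-1] with x ≠ x₀. -/
/-! For `x₀ ≠ 0` and `m ≥ 1` the polynomial `P = X (X - (m + 1) x₀)^m` satisfies
`P(u x₀) = u (1 + (1 - u) / m)^m P(x₀)`, and `u (1 + (1 - u) / m)^m ≤ u e^(1 - u) < 1` for
`0 ≤ u ≤ m + 1`, `u ≠ 1`. So `|P|` peaks at `x₀` on the segment from `0` to `(m + 1) x₀`, which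
contains `[a, -1]` once `m ≥ -a`. For `x₀ < 0` the coefficients of `P` are nonnegative, and
dividing by `P(1) > 0` makes it a convex-polynomial. -/

/-- A convex-polynomial: all coefficients nonnegative and they sum to 1
(equivalently, `p.eval 1 = 1`). -/
def IsConvexPolynomial (p : Polynomial ℝ) : Prop :=
  (∀ n : ℕ, 0 ≤ p.coeff n) ∧ p.eval 1 = 1

open Polynomial

theorem isConvexPolynomial_C_inv_eval_one_mul {q : ℝ[X]} (hq : ∀ n, 0 ≤ q.coeff n)
    (hq1 : 0 < q.eval 1) : IsConvexPolynomial (C (q.eval 1)⁻¹ * q) :=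
  ⟨fun n ↦ by simpa [coeff_C_mul] using mul_nonneg (inv_nonneg.2 hq1.le) (hq n),
    by simp [hq1.ne']⟩

theorem Real.abs_mul_one_add_div_pow_lt_one {m : ℕ} (hm : m ≠ 0) {u : ℝ} (hu₀ : 0 ≤ u)
    (hum : u ≤ m + 1) (hu₁ : u ≠ 1) : |u * (1 + (1 - u) / m) ^ m| < 1 := by
  have hm' : (0 : ℝ) < m := by positivity
  have hbase : 0 ≤ 1 + (1 - u) / m := by rw [← sub_nonneg]; field_simp; linarith
  rw [abs_of_nonneg (by positivity)]
  calc u * (1 + (1 - u) / m) ^ m ≤ u * exp ((1 - u) / m) ^ m := by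
        gcongr
        linarith [add_one_le_exp ((1 - u) / m)]
    _ = u * exp (1 - u) := by rw [← exp_nat_mul]; field_simp
    _ < exp (u - 1) * exp (1 - u) := by
        gcongr
        linarith [add_one_lt_exp (sub_ne_zero.2 hu₁)]
    _ = 1 := by rw [← exp_add]; simp

noncomputable def peakPolynomial (m : ℕ) (x₀ : ℝ) : ℝ[X] :=
  X * (X - C ((m + 1) * x₀)) ^ m

theorem coeff_peakPolynomial_nonneg {x₀ : ℝ} (hx₀ : x₀ ≤ 0) (m n : ℕ) :
    0 ≤ (peakPolynomial m x₀).coeff n := by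
  have ht : 0 ≤ -((m + 1) * x₀) := by nlinarith
  rw [peakPolynomial, sub_eq_add_neg, ← C_neg]
  rcases n with _ | n
  · simp
  · rw [coeff_X_mul, coeff_X_add_C_pow]
    positivity

theorem eval_one_peakPolynomial_pos {x₀ : ℝ} (hx₀ : x₀ ≤ 0) (m : ℕ) :
    0 < (peakPolynomial m x₀).eval 1 := by
  have : 0 < 1 - (m + 1) * x₀ := by nlinarith
  simp only [peakPolynomial, eval_mul, eval_X, eval_pow, eval_sub, eval_C, one_mul]
  positivity

theorem eval_mul_peakPolynomial {m : ℕ} (hm : m ≠ 0) (x₀ u : ℝ) :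
    (peakPolynomial m x₀).eval (u * x₀) =
      u * (1 + (1 - u) / m) ^ m * (peakPolynomial m x₀).eval x₀ := by
  simp only [peakPolynomial, eval_mul, eval_X, eval_pow, eval_sub, eval_C]
  rw [show u * (1 + (1 - u) / m) ^ m * (x₀ * (x₀ - (m + 1) * x₀) ^ m) =
    u * x₀ * ((1 + (1 - u) / m) * (x₀ - (m + 1) * x₀)) ^ m by rw [mul_pow]; ring]
  congr 2
  field_simp
  ring

theorem abs_eval_peakPolynomial_lt {m : ℕ} (hm : m ≠ 0) {x₀ : ℝ} (hx₀ : x₀ ≠ 0) {u : ℝ}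
    (hu₀ : 0 ≤ u) (hum : u ≤ m + 1) (hu₁ : u ≠ 1) :
    |(peakPolynomial m x₀).eval (u * x₀)| < |(peakPolynomial m x₀).eval x₀| := by
  have hP : (peakPolynomial m x₀).eval x₀ ≠ 0 := by
    simp [peakPolynomial, hx₀, hm, show x₀ - (m + 1) * x₀ = -(m * x₀) by ring]
  rw [eval_mul_peakPolynomial hm, abs_mul]
  exact mul_lt_of_lt_one_left (abs_pos.2 hP)
    (Real.abs_mul_one_add_div_pow_lt_one hm hu₀ hum hu₁)

theorem peak_points_of_convexPolynomials (a : ℝ) (ha : a < -1) :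
    ∀ x₀ ∈ Set.Icc a (-1 : ℝ), ∃ p : Polynomial ℝ, IsConvexPolynomial p ∧
      ∀ x ∈ Set.Icc a (-1 : ℝ), x ≠ x₀ → |p.eval x| < |p.eval x₀| := by
  rintro x₀ ⟨-, hx₀⟩
  have hx₀' : x₀ < 0 := by linarith
  obtain ⟨m, hm, ham⟩ : ∃ m : ℕ, m ≠ 0 ∧ -a ≤ m :=
    ⟨⌈-a⌉₊, (Nat.ceil_pos.2 (by linarith)).ne', Nat.le_ceil _⟩
  set P := peakPolynomial m x₀
  have hP1 := eval_one_peakPolynomial_pos hx₀'.le m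
  refine ⟨C (P.eval 1)⁻¹ * P,
    isConvexPolynomial_C_inv_eval_one_mul (coeff_peakPolynomial_nonneg hx₀'.le m) hP1, ?_⟩
  rintro x ⟨hax, hx⟩ hne
  have key := abs_eval_peakPolynomial_lt hm hx₀'.ne (u := x / x₀)
    (div_nonneg_of_nonpos (by linarith) hx₀'.le)
    (by rw [div_le_iff_of_neg hx₀']; nlinarith)
    (by rwa [ne_eq, div_eq_one_iff_eq hx₀'.ne])
  rw [div_mul_cancel₀ _ hx₀'.ne] at key
  simp only [eval_mul, eval_C, abs_mul]
  exact mul_lt_mul_of_pos_left key (by positivity)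
end

section
/- Let a < b be real numbers. The convex-polynomials are uniformly dense in C([a,b], ℝ) (i.e., for every continuous f : [a,b] → ℝ and every ε > 0 there is a convex-polynomial p with sup_{x ∈ [a,b]} |p(x) - f(x)| < ε) if and only if b < -1. -/
open Polynomial Set Finset
open scoped Nat

theorem isConvexPolynomial_one : IsConvexPolynomial 1 :=
  ⟨fun n => by rw [coeff_one]; split_ifs <;> norm_num, eval_one⟩

theorem isConvexPolynomial_X : IsConvexPolynomial X :=
  ⟨fun n => by rw [coeff_X]; split_ifs <;> norm_num, eval_X⟩

namespace IsConvexPolynomial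

variable {p q : ℝ[X]}

theorem mul (hp : IsConvexPolynomial p) (hq : IsConvexPolynomial q) :
    IsConvexPolynomial (p * q) :=
  ⟨fun n => by rw [coeff_mul]; exact sum_nonneg fun _ _ => mul_nonneg (hp.1 _) (hq.1 _),
    by rw [eval_mul, hp.2, hq.2, one_mul]⟩

theorem expand (hp : IsConvexPolynomial p) {m : ℕ} (hm : 0 < m) :
    IsConvexPolynomial (expand ℝ m p) :=
  ⟨fun n => by rw [coeff_expand hm]; split_ifs <;> simp [hp.1],
    by rw [expand_eval, one_pow, hp.2]⟩

theorem neg_one_le_eval (hp : IsConvexPolynomial p) {x : ℝ} (hx : -1 ≤ x) :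
    -1 ≤ p.eval x := by
  have hpow : ∀ n : ℕ, -1 ≤ x ^ n := fun n => by
    rcases le_or_gt 0 x with hx0 | hx0
    · linarith [pow_nonneg hx0 n]
    · have hxn : |x ^ n| ≤ 1 := by
        rw [abs_pow]
        exact pow_le_one₀ (abs_nonneg x) (by rw [abs_of_neg hx0]; linarith)
      linarith [neg_abs_le (x ^ n)]
  have hsum : ∑ i ∈ range (p.natDegree + 1), p.coeff i = 1 := by
    simpa [eval_eq_sum_range] using hp.2
  calc -1 = ∑ i ∈ range (p.natDegree + 1), p.coeff i * -1 := by rw [← sum_mul, hsum]; ring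
    _ ≤ p.eval x := by
        rw [eval_eq_sum_range]
        exact sum_le_sum fun i _ => mul_le_mul_of_nonneg_left (hpow i) (hp.1 i)

end IsConvexPolynomial

theorem convex_setOf_isConvexPolynomial : Convex ℝ {p : ℝ[X] | IsConvexPolynomial p} := by
  rintro p ⟨hp, hp1⟩ q ⟨hq, hq1⟩ s t hs ht hst
  refine ⟨fun n => ?_, ?_⟩
  · simp only [coeff_add, coeff_smul, smul_eq_mul]
    exact add_nonneg (mul_nonneg hs (hp n)) (mul_nonneg ht (hq n))
  · simp [hp1, hq1, hst]

def convexPolynomials : Submonoid ℝ[X] where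
  carrier := {p | IsConvexPolynomial p}
  mul_mem' := IsConvexPolynomial.mul
  one_mem' := isConvexPolynomial_one

theorem abs_sub_sum_range_le_of_hasSum {f g : ℕ → ℝ} {a b : ℝ} (hf : HasSum f a)
    (hg : HasSum g b) (hfg : ∀ n, |f n| ≤ g n) (N : ℕ) :
    |a - ∑ i ∈ range N, f i| ≤ b - ∑ i ∈ range N, g i :=
  ((hasSum_nat_add_iff' N).2 hf).norm_le_of_bounded ((hasSum_nat_add_iff' N).2 hg) fun _ => hfg _

theorem exists_isConvexPolynomial_near_of_hasSum {w : ℕ → ℝ} (hw : ∀ n, 0 ≤ w n)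
    (hw1 : HasSum w 1) {F : ℝ → ℝ} (hF : ∀ y, HasSum (fun n => w n * y ^ n) (F y)) (R : ℝ)
    {ε : ℝ} (hε : 0 < ε) :
    ∃ q, IsConvexPolynomial q ∧ ∀ y, |y| ≤ R → |q.eval y - F y| < ε := by
  obtain ⟨N, hN1, hNR⟩ :=
    ((hw1.tendsto_sum_nat.eventually (lt_mem_nhds (by linarith : 1 - ε / 2 < 1))).and
      ((hF R).tendsto_sum_nat.eventually (lt_mem_nhds (by linarith : F R - ε / 2 < F R)))).exists
  set s := ∑ i ∈ range N, w i
  have hs : s ≤ 1 := sum_le_hasSum _ (fun i _ => hw i) hw1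
  refine ⟨C (1 - s) + ∑ i ∈ range N, C (w i) * X ^ i, ⟨fun n => ?_, ?_⟩, fun y hy => ?_⟩
  · rw [coeff_add, coeff_C, finsetSum_coeff]
    refine add_nonneg (by split_ifs <;> linarith) (sum_nonneg fun i _ => ?_)
    rw [coeff_C_mul_X_pow]
    split_ifs <;> simp [hw]
  · simp [s, eval_finsetSum]
  · have htail := abs_sub_sum_range_le_of_hasSum (hF y) (hF R) (fun n => by
      rw [abs_mul, abs_of_nonneg (hw n), abs_pow]
      exact mul_le_mul_of_nonneg_left (pow_le_pow_left₀ (abs_nonneg y) hy n) (hw n)) N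
    have heval : (C (1 - s) + ∑ i ∈ range N, C (w i) * X ^ i).eval y
        = (1 - s) + ∑ i ∈ range N, w i * y ^ i := by simp [eval_finsetSum]
    rw [abs_sub_comm] at htail
    rw [heval, add_sub_assoc]
    calc |(1 - s) + (∑ i ∈ range N, w i * y ^ i - F y)|
        ≤ |1 - s| + |∑ i ∈ range N, w i * y ^ i - F y| := abs_add_le _ _
      _ < ε := by rw [abs_of_nonneg (by linarith)]; linarith

theorem exists_isConvexPolynomial_near_two_mul_exp_sub_two (R : ℝ) {ε : ℝ} (hε : 0 < ε) :
    ∃ q, IsConvexPolynomial q ∧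
      ∀ y, |y| ≤ R → |q.eval y - (2 * Real.exp (Real.log (3 / 2) * y) - 2)| < ε := by
  set l := Real.log (3 / 2)
  have hl : 0 ≤ l := Real.log_nonneg (by norm_num)
  have hF : ∀ y, HasSum (fun n => (2 * l ^ n / (n ! : ℝ) - if n = 0 then 2 else 0) * y ^ n)
      (2 * Real.exp (l * y) - 2) := fun y => by
    have hexp := ((NormedSpace.expSeries_div_hasSum_exp (l * y)).mul_left 2).sub
      (hasSum_ite_eq 0 (2 : ℝ))
    rw [← Real.exp_eq_exp_ℝ] at hexp
    convert hexp using 2 with n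
    · rfl
    · split_ifs with hn <;> simp [hn, mul_pow]; ring
  refine exists_isConvexPolynomial_near_of_hasSum (fun n => ?_) ?_ hF R hε
  · rcases n with _ | n
    · simp
    · simp only [Nat.succ_ne_zero, if_false, sub_zero]; positivity
  · convert hF 1 using 1 <;> simp [l, Real.exp_log]; norm_num

theorem exists_odd_forall_pow_le {b : ℝ} (hb : b < -1) (M : ℝ) :
    ∃ m, Odd m ∧ ∀ x ≤ b, x ^ m ≤ M := by
  obtain ⟨n, hn⟩ := pow_unbounded_of_one_lt (-M) (by linarith : 1 < -b)
  refine ⟨2 * n + 1, odd_two_mul_add_one n, fun x hx => ?_⟩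
  calc x ^ (2 * n + 1) ≤ b ^ (2 * n + 1) := (odd_two_mul_add_one n).pow_le_pow.2 hx
    _ = -(-b) ^ (2 * n + 1) := by rw [(odd_two_mul_add_one n).neg_pow, neg_neg]
    _ ≤ -(-b) ^ n := neg_le_neg (pow_le_pow_right₀ (by linarith) (by omega))
    _ ≤ M := by linarith

theorem exists_isConvexPolynomial_near_neg_two {a b : ℝ} (hb : b < -1) {ε : ℝ} (hε : 0 < ε) :
    ∃ p, IsConvexPolynomial p ∧ ∀ x ∈ Icc a b, |p.eval x - -2| < ε := by
  set l := Real.log (3 / 2)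
  have hl : 0 < l := Real.log_pos (by norm_num)
  obtain ⟨m, hm, hpow⟩ := exists_odd_forall_pow_le hb (Real.log (ε / 4) / l)
  obtain ⟨q, hq, hqF⟩ :=
    exists_isConvexPolynomial_near_two_mul_exp_sub_two (|a| ^ m) (half_pos hε)
  refine ⟨expand ℝ m q, hq.expand hm.pos, fun x ⟨hax, hxb⟩ => ?_⟩
  have hxm : |x ^ m| ≤ |a| ^ m := by
    rw [abs_pow]
    exact pow_le_pow_left₀ (abs_nonneg x) (abs_le_abs_of_nonpos (by linarith) hax) m
  have hexp : Real.exp (l * x ^ m) ≤ ε / 4 := by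
    rw [← Real.exp_log (by positivity : 0 < ε / 4), Real.exp_le_exp, mul_comm,
      ← le_div_iff₀ hl]
    exact hpow x hxb
  rw [expand_eval]
  calc |q.eval (x ^ m) - -2|
      = |(q.eval (x ^ m) - (2 * Real.exp (l * x ^ m) - 2)) + 2 * Real.exp (l * x ^ m)| := by
        ring_nf
    _ ≤ |q.eval (x ^ m) - (2 * Real.exp (l * x ^ m) - 2)| + 2 * Real.exp (l * x ^ m) :=
        (abs_add_le _ _).trans_eq (by rw [abs_of_pos (mul_pos two_pos (Real.exp_pos _))])
    _ < ε := by linarith [hqF _ hxm]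

theorem Convex.eq_univ_of_forall_pow_mem {S : Set ℝ} (hS : Convex ℝ S) {c : ℝ} (hc : c < -1)
    (h : ∀ n : ℕ, c ^ n ∈ S) : S = univ := by
  refine eq_univ_of_forall fun r => ?_
  obtain ⟨n, hn⟩ := pow_unbounded_of_one_lt |r| (by nlinarith : 1 < c ^ 2)
  rw [← pow_mul] at hn
  have hodd : c ^ (2 * n + 1) ≤ -c ^ (2 * n) := by
    rw [pow_succ]; nlinarith [pow_nonneg (sq_nonneg c) n, pow_mul c 2 n]
  exact hS.ordConnected.out (h (2 * n + 1)) (h (2 * n))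
    ⟨by linarith [neg_abs_le r], by linarith [le_abs_self r]⟩

section

variable (a b : ℝ)

noncomputable def convexPolynomialClosure : Submonoid C(Icc a b, ℝ) :=
  (convexPolynomials.map (toContinuousMapOnAlgHom (Icc a b))).topologicalClosure

variable {a b}

theorem isClosed_convexPolynomialClosure :
    IsClosed (convexPolynomialClosure a b : Set C(Icc a b, ℝ)) :=
  Submonoid.isClosed_topologicalClosure _

theorem convex_convexPolynomialClosure :
    Convex ℝ (convexPolynomialClosure a b : Set C(Icc a b, ℝ)) :=
  (convex_setOf_isConvexPolynomial.linear_image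
    (toContinuousMapOnAlgHom (Icc a b)).toLinearMap).closure

theorem algebraMap_mem_convexPolynomialClosure (hb : b < -1) (r : ℝ) :
    algebraMap ℝ C(Icc a b, ℝ) r ∈ convexPolynomialClosure a b := by
  have hneg_two : algebraMap ℝ C(Icc a b, ℝ) (-2) ∈ convexPolynomialClosure a b := by
    refine Metric.mem_closure_iff.2 fun ε hε => ?_
    obtain ⟨p, hp, hpε⟩ := exists_isConvexPolynomial_near_neg_two (a := a) hb hε
    refine ⟨_, ⟨p, hp, rfl⟩, ?_⟩
    rw [dist_comm, ContinuousMap.dist_lt_iff hε]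
    exact fun x => by simpa [Real.dist_eq] using hpε x x.2
  have hconvex :
      Convex ℝ {r : ℝ | algebraMap ℝ C(Icc a b, ℝ) r ∈ convexPolynomialClosure a b} :=
    convex_convexPolynomialClosure.linear_preimage (Algebra.linearMap ℝ C(Icc a b, ℝ))
  refine eq_univ_iff_forall.1 (hconvex.eq_univ_of_forall_pow_mem (c := -2) (by norm_num)
    fun n => ?_) r
  simpa using pow_mem hneg_two n

theorem convexPolynomialClosure_eq_top (hb : b < -1) : convexPolynomialClosure a b = ⊤ := by
  set K := convexPolynomialClosure a b
  have hconst := algebraMap_mem_convexPolynomialClosure (a := a) hb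
  have hadd : ∀ {f g}, f ∈ K → g ∈ K → f + g ∈ K := fun {f g} hf hg => by
    have hsplit : f + g =
        (1 / 2 : ℝ) • (algebraMap ℝ _ 2 * f) +
          (1 / 2 : ℝ) • (algebraMap ℝ _ 2 * g) := by
      ext; simp
    rw [hsplit]
    exact convex_convexPolynomialClosure (K.mul_mem (hconst 2) hf) (K.mul_mem (hconst 2) hg)
      (by norm_num) (by norm_num) (by norm_num)
  let A : Subalgebra ℝ C(Icc a b, ℝ) :=
    { K with add_mem' := hadd, zero_mem' := by simpa using hconst 0, algebraMap_mem' := hconst }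
  have hX : toContinuousMapOnAlgHom (Icc a b) X ∈ A :=
    subset_closure ⟨X, isConvexPolynomial_X, rfl⟩
  have hpoly : (polynomialFunctions (Icc a b)).topologicalClosure ≤ A := by
    refine Subalgebra.topologicalClosure_minimal ?_ isClosed_convexPolynomialClosure
    rw [polynomialFunctions.eq_adjoin_X]
    exact Algebra.adjoin_le (singleton_subset_iff.2 hX)
  rw [polynomialFunctions_closure_eq_top] at hpoly
  exact eq_top_iff.2 fun f _ => hpoly trivial

theorem exists_isConvexPolynomial_near (hb : b < -1) {f : ℝ → ℝ}
    (hf : ContinuousOn f (Icc a b)) {ε : ℝ} (hε : 0 < ε) :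
    ∃ p, IsConvexPolynomial p ∧ ∀ x ∈ Icc a b, |p.eval x - f x| < ε := by
  have hmem : (⟨fun x => f x, hf.comp_continuous continuous_subtype_val Subtype.prop⟩ :
      C(Icc a b, ℝ)) ∈ convexPolynomialClosure a b := by
    rw [convexPolynomialClosure_eq_top hb]; trivial
  obtain ⟨_, ⟨p, hp, rfl⟩, hpε⟩ := Metric.mem_closure_iff.1 hmem ε hε
  refine ⟨p, hp, fun x hx => ?_⟩
  have hx := (ContinuousMap.dist_apply_le_dist ⟨x, hx⟩).trans_lt hpε
  rwa [dist_comm, Real.dist_eq] at hx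

end

theorem convex_stone_weierstrass (a b : ℝ) (hab : a < b) :
    (∀ f : ℝ → ℝ, ContinuousOn f (Set.Icc a b) → ∀ ε : ℝ, 0 < ε →
      ∃ p : Polynomial ℝ, IsConvexPolynomial p ∧ ∀ x ∈ Set.Icc a b, |p.eval x - f x| < ε)
    ↔ b < -1 := by
  refine ⟨fun h => ?_, fun hb f hf ε hε => exists_isConvexPolynomial_near hb hf hε⟩
  by_contra! hb
  obtain ⟨p, hp, hpb⟩ := h (fun _ => -2) continuousOn_const 1 one_pos
  have hlt := (abs_lt.1 (hpb b ⟨hab.le, le_rfl⟩)).2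
  linarith [hp.neg_one_le_eval hb]
end

section
/- Let a < b < -1 and let k be a positive integer. Then the convex hull of the set of functions {x ↦ x^{kn} : n ≥ 0} is uniformly dense in C([a,b], ℝ) if and only if k is odd. -/
/-!
For even `k`, every `x ↦ x^(kn)`, hence every convex combination of them, is `≥ 1` at `b`, so `0`
cannot be approximated. For odd `k`, `y = x^k` is injective on `[a, b]` with values in `[-γ, -β]`,
`1 < β`, and the convex hull consists of the `P(y)` with `P ∈ ℝ≥0[X]`, `P(1) = 1`. For odd `K` and
large `N`, the polynomial `W = (1 + y^K/(4N))^N - 1` has nonnegative coefficients, is uniformly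
close to `-1` on `[-γ, -β]`, and `W(1) ≤ e^{1/4} - 1 < 1/2`. So the closure of the
nonnegative-coefficient polynomials in `y` is a closed `ℝ≥0`-algebra containing `-1`, hence all
real polynomials in `y`, hence everything by Stone–Weierstrass. Multiplying by an even power of `W`
pushes the value at `1` below `1` while barely moving the function on `[-γ, -β]`; adding a
multiple of the normalized `1 + W`, which is small there, makes the value at `1` exactly `1`.
-/

open Polynomial Set
open scoped NNReal

namespace ConvexHullPowers

lemma coe_eval_eq_aeval (P : ℝ≥0[X]) (x : ℝ≥0) : ((P.eval x : ℝ≥0) : ℝ) = aeval (x : ℝ) P :=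
  (aeval_algebraMap_apply_eq_algebraMap_eval x P).symm

/-- `(1 + r X^K)^N - 1`, written as `r X^K ∑_{j<N} (1 + r X^K)^j` so that it lies in `ℝ≥0[X]`. -/
noncomputable def powSubOne (r : ℝ≥0) (K N : ℕ) : ℝ≥0[X] :=
  C r * X ^ K * ∑ j ∈ Finset.range N, (1 + C r * X ^ K) ^ j

lemma aeval_powSubOne (r : ℝ≥0) (K N : ℕ) (y : ℝ) :
    aeval y (powSubOne r K N) = (1 + r * y ^ K) ^ N - 1 := by
  rw [← geom_sum_mul, add_sub_cancel_left, mul_comm]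
  simp [powSubOne]

lemma exists_nnpoly_near_neg_one {β γ η : ℝ} (hβ : 1 < β) (hη : 0 < η) :
    ∃ W : ℝ≥0[X], W.eval 1 ≤ 1 / 2 ∧ ∀ y ∈ Icc (-γ) (-β), |aeval y W + 1| ≤ η := by
  obtain ⟨n, hn⟩ := pow_unbounded_of_one_lt (-4 * Real.log η) hβ
  set K := 2 * n + 1
  have hβK : -4 * Real.log η ≤ β ^ K := hn.le.trans (pow_le_pow_right₀ hβ.le (by omega))
  obtain ⟨N, hN⟩ := exists_nat_ge (γ ^ K / 4)
  -- On `[-γ, -β]`, `y ^ K ≤ -β ^ K ≤ 4 log η` as `K` is odd, and `γ ^ K ≤ 4 * N` keeps the base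
  -- `1 + y ^ K / (4 * N)` of the power below nonnegative.
  have hW (y : ℝ) : aeval y (powSubOne (4 * N)⁻¹ K N) + 1 = (1 - (-y ^ K / 4) / N) ^ N := by
    rw [aeval_powSubOne]; push_cast; ring
  refine ⟨powSubOne (4 * N)⁻¹ K N, ?_, fun y hy => ?_⟩
  · have hexp : Real.exp (1 / 4) < 4 / 3 := by
      have := Real.exp_bound_div_one_sub_of_interval' (x := 1 / 4) (by norm_num) (by norm_num)
      norm_num at this ⊢; linarith
    have hpow := Real.one_sub_div_pow_le_exp_neg (n := N) (t := -(1 / 4))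
      (by linarith [N.cast_nonneg (α := ℝ)])
    rw [neg_neg] at hpow
    have hW1 := hW 1
    rw [← NNReal.coe_le_coe, coe_eval_eq_aeval]
    norm_num at hW1 ⊢
    linarith
  · have ht : β ^ K ≤ (-y) ^ K ∧ (-y) ^ K ≤ γ ^ K :=
      ⟨pow_le_pow_left₀ (by linarith) (by linarith [hy.2]) K,
        pow_le_pow_left₀ (by linarith [hy.2]) (by linarith [hy.1]) K⟩
    rw [(odd_two_mul_add_one n).neg_pow] at ht
    have hbase : 0 ≤ 1 - (-y ^ K / 4) / N :=
      sub_nonneg.2 (div_le_one_of_le₀ (by linarith) (Nat.cast_nonneg N))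
    rw [hW, abs_of_nonneg (pow_nonneg hbase N)]
    calc (1 - (-y ^ K / 4) / N) ^ N ≤ Real.exp (-(-y ^ K / 4)) :=
          Real.one_sub_div_pow_le_exp_neg (by linarith)
      _ ≤ Real.exp (Real.log η) := Real.exp_le_exp.2 (by linarith)
      _ = η := Real.exp_log hη

lemma exists_nnpoly_eval_one_eq_one_near_zero {β γ η : ℝ} (hβ : 1 < β) (hη : 0 < η) :
    ∃ V : ℝ≥0[X], V.eval 1 = 1 ∧ ∀ y ∈ Icc (-γ) (-β), |aeval y V| ≤ η := by
  obtain ⟨W, -, hW⟩ := exists_nnpoly_near_neg_one (γ := γ) hβ hη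
  refine ⟨C (1 + W.eval 1)⁻¹ * (1 + W), by simp [add_comm], fun y hy => ?_⟩
  have hc : ((1 + W.eval 1)⁻¹ : ℝ≥0) ≤ 1 := inv_le_one_of_one_le₀ le_self_add
  calc |aeval y (C (1 + W.eval 1)⁻¹ * (1 + W))| = ((1 + W.eval 1)⁻¹ : ℝ≥0) * |aeval y W + 1| := by
        simp [abs_mul, add_comm]
        exact Or.inl (by positivity)
    _ ≤ 1 * η := mul_le_mul (by exact_mod_cast hc) (hW y hy) (abs_nonneg _) zero_le_one
    _ = η := one_mul η

section ContinuousMap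

variable {α : Type*} [TopologicalSpace α]

lemma aeval_continuousMap_apply_nnreal (φ : C(α, ℝ)) (P : ℝ≥0[X]) (x : α) :
    aeval φ P x = aeval (φ x) P :=
  (aeval_algHom_apply (ContinuousMap.evalAlgHom ℝ≥0 ℝ x) φ P).symm

variable [CompactSpace α] {φ : C(α, ℝ)} {β γ : ℝ}

lemma neg_one_mem_closure_image_aeval (hβ : 1 < β) (hφ : ∀ x, φ x ∈ Icc (-γ) (-β)) :
    (-1 : C(α, ℝ)) ∈ closure (aeval φ '' {W : ℝ≥0[X] | W.eval 1 ≤ 1 / 2}) := by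
  refine Metric.mem_closure_iff.2 fun ε hε => ?_
  obtain ⟨W, hW1, hW⟩ := exists_nnpoly_near_neg_one hβ (half_pos hε)
  refine ⟨aeval φ W, ⟨W, hW1, rfl⟩, ?_⟩
  rw [dist_comm, dist_eq_norm, sub_neg_eq_add]
  refine ((ContinuousMap.norm_le _ (half_pos hε).le).2 fun x => ?_).trans_lt (half_lt_self hε)
  simpa [aeval_continuousMap_apply_nnreal] using hW _ (hφ x)

lemma aeval_mem_closure_image_eval_one_le (hβ : 1 < β) (hφ : ∀ x, φ x ∈ Icc (-γ) (-β))
    (P : ℝ≥0[X]) : aeval φ P ∈ closure (aeval φ '' {Q : ℝ≥0[X] | Q.eval 1 ≤ 1}) := by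
  obtain ⟨M, hM⟩ := pow_unbounded_of_one_lt (P.eval 1) (by norm_num : (1 : ℝ≥0) < 4)
  have hcont : Continuous fun g : C(α, ℝ) => aeval φ P * (g ^ 2) ^ M := by fun_prop
  convert map_mem_closure hcont (neg_one_mem_closure_image_aeval hβ hφ) ?_ using 1
  · simp
  · rintro _ ⟨W, hW, rfl⟩
    refine ⟨P * (W ^ 2) ^ M, ?_, by simp⟩
    calc (P * (W ^ 2) ^ M).eval 1 = P.eval 1 * ((W.eval 1) ^ 2) ^ M := by simp
      _ ≤ 4 ^ M * ((1 / 2) ^ 2) ^ M := by gcongr; exact hW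
      _ = 1 := by rw [← mul_pow]; norm_num

lemma aeval_mem_closure_image_eval_one_eq (hβ : 1 < β) (hφ : ∀ x, φ x ∈ Icc (-γ) (-β))
    {Q : ℝ≥0[X]} (hQ : Q.eval 1 ≤ 1) :
    aeval φ Q ∈ closure (aeval φ '' {Q : ℝ≥0[X] | Q.eval 1 = 1}) := by
  refine Metric.mem_closure_iff.2 fun ε hε => ?_
  obtain ⟨V, hV1, hV⟩ := exists_nnpoly_eval_one_eq_one_near_zero hβ (half_pos hε)
  refine ⟨aeval φ (Q + C (1 - Q.eval 1) * V), ⟨_, ?_, rfl⟩, ?_⟩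
  · simp [hV1, add_tsub_cancel_of_le hQ]
  rw [dist_eq_norm, map_add, sub_add_cancel_left, norm_neg]
  refine ((ContinuousMap.norm_le _ (half_pos hε).le).2 fun x => ?_).trans_lt (half_lt_self hε)
  have hc : ((1 - Q.eval 1 : ℝ≥0) : ℝ) ≤ 1 := by exact_mod_cast tsub_le_self
  calc ‖aeval φ (C (1 - Q.eval 1) * V) x‖ = ((1 - Q.eval 1 : ℝ≥0) : ℝ) * |aeval (φ x) V| := by
        rw [aeval_continuousMap_apply_nnreal]
        simp
    _ ≤ 1 * (ε / 2) := mul_le_mul hc (hV _ (hφ x)) (abs_nonneg _) zero_le_one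
    _ = ε / 2 := one_mul _

lemma dense_range_aeval_of_neg_one_mem_closure (hinj : Function.Injective φ)
    (hneg : (-1 : C(α, ℝ)) ∈ closure (range (aeval (R := ℝ≥0) φ))) :
    Dense (range (aeval (R := ℝ≥0) φ)) := by
  set S := (aeval (R := ℝ≥0) φ).range.topologicalClosure
  have hφS : φ ∈ S := (aeval (R := ℝ≥0) φ).range.le_topologicalClosure ⟨X, aeval_X φ⟩
  have halg (s : ℝ≥0) : algebraMap ℝ C(α, ℝ) s = algebraMap ℝ≥0 C(α, ℝ) s :=
    (IsScalarTower.algebraMap_apply ℝ≥0 ℝ C(α, ℝ) s).symm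
  have haeval_mem (q : ℝ[X]) : aeval φ q ∈ S := by
    induction q using Polynomial.induction_on' with
    | add p q hp hq => rw [map_add]; exact add_mem hp hq
    | monomial n r =>
      rw [aeval_monomial]
      refine mul_mem ?_ (pow_mem hφS n)
      rcases le_total 0 r with hr | hr
      · lift r to ℝ≥0 using hr
        rw [halg]
        exact algebraMap_mem S r
      · lift -r to ℝ≥0 using neg_nonneg.2 hr with s hs
        rw [← neg_neg r, ← hs, map_neg, halg, ← neg_one_mul]
        exact mul_mem hneg (algebraMap_mem S s)
  have hsep : (Algebra.adjoin ℝ {φ}).SeparatesPoints := fun x y hxy =>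
    ⟨φ, ⟨φ, Algebra.subset_adjoin (mem_singleton φ), rfl⟩, hinj.ne hxy⟩
  have hadjoin : Dense (Algebra.adjoin ℝ {φ} : Set C(α, ℝ)) := by
    rw [dense_iff_closure_eq, ← Subalgebra.topologicalClosure_coe,
      ContinuousMap.subalgebra_topologicalClosure_eq_top_of_separatesPoints _ hsep, Algebra.coe_top]
  refine (hadjoin.mono ?_).of_closure
  rw [Algebra.adjoin_singleton_eq_range_aeval]
  rintro _ ⟨q, rfl⟩
  exact haeval_mem q

lemma dense_image_aeval_eval_one_eq (hβ : 1 < β) (hφ : ∀ x, φ x ∈ Icc (-γ) (-β))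
    (hinj : Function.Injective φ) :
    Dense (aeval φ '' {Q : ℝ≥0[X] | Q.eval 1 = 1}) := by
  have hdense := dense_range_aeval_of_neg_one_mem_closure hinj
    (closure_mono (image_subset_range _ _) (neg_one_mem_closure_image_aeval hβ hφ))
  refine (hdense.mono (range_subset_iff.2 fun P => ?_)).of_closure
  refine closure_minimal ?_ isClosed_closure (aeval_mem_closure_image_eval_one_le hβ hφ P)
  rintro _ ⟨Q, hQ, rfl⟩
  exact aeval_mem_closure_image_eval_one_eq hβ hφ hQ

end ContinuousMap

lemma aeval_pow_mem_convexHull (k : ℕ) {Q : ℝ≥0[X]} (hQ : Q.eval 1 = 1) :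
    (fun x : ℝ => aeval (x ^ k) Q) ∈
      convexHull ℝ (range fun n : ℕ => fun x : ℝ => x ^ (k * n)) := by
  have hfun : (fun x : ℝ => aeval (x ^ k) Q) =
      ∑ i ∈ Finset.range (Q.natDegree + 1), (Q.coeff i : ℝ) • fun x : ℝ => x ^ (k * i) := by
    funext x
    simp [aeval_eq_sum_range, pow_mul, NNReal.smul_def]
  rw [hfun]
  refine (convex_convexHull ℝ _).sum_mem (fun i _ => (Q.coeff i).2) ?_
    fun i _ => subset_convexHull ℝ _ ⟨i, rfl⟩
  rw [← NNReal.coe_sum, ← NNReal.coe_one, ← hQ, eval_eq_sum_range]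
  simp

lemma one_le_apply_of_mem_convexHull {k : ℕ} (hk : Even k) {c : ℝ} (hc : 1 ≤ |c|) {g : ℝ → ℝ}
    (hg : g ∈ convexHull ℝ (range fun n : ℕ => fun x : ℝ => x ^ (k * n))) : 1 ≤ g c := by
  refine convexHull_min ?_ (convex_halfSpace_ge (LinearMap.proj c).isLinear 1) hg
  rintro _ ⟨n, rfl⟩
  change 1 ≤ c ^ (k * n)
  rw [← (hk.mul_right n).pow_abs]
  exact one_le_pow₀ hc

end ConvexHullPowers

open ConvexHullPowers in
theorem convexHull_powers_of_k_dense_iff_odd_general (a b : ℝ) (hab : a < b) (hb : b < -1)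
    (k : ℕ) :
    (∀ f : ℝ → ℝ, ContinuousOn f (Set.Icc a b) → ∀ ε : ℝ, 0 < ε →
      ∃ g ∈ convexHull ℝ (Set.range fun n : ℕ => fun x : ℝ => x ^ (k * n)),
        ∀ x ∈ Set.Icc a b, |g x - f x| < ε)
    ↔ Odd k := by
  constructor
  · intro hdense
    by_contra hk
    obtain ⟨g, hg, hgf⟩ := hdense 0 continuousOn_const 1 one_pos
    have h1 := one_le_apply_of_mem_convexHull (Nat.not_odd_iff_even.1 hk)
      (by rw [abs_of_neg (by linarith)]; linarith) hg
    have h2 := hgf b ⟨hab.le, le_rfl⟩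
    rw [Pi.zero_apply, sub_zero] at h2
    linarith [(abs_lt.1 h2).2]
  · intro hk f hf ε hε
    let φ : C(Icc a b, ℝ) := ⟨fun x => (x : ℝ) ^ k, by fun_prop⟩
    have hφ (x : Icc a b) : φ x ∈ Icc (-(-a) ^ k) (-(-b) ^ k) := by
      rw [← hk.neg_pow, ← hk.neg_pow, neg_neg, neg_neg]
      exact ⟨hk.strictMono_pow.monotone x.2.1, hk.strictMono_pow.monotone x.2.2⟩
    obtain ⟨_, ⟨Q, hQ, rfl⟩, hQf⟩ :=
      (dense_image_aeval_eval_one_eq (one_lt_pow₀ (by linarith) hk.pos.ne') hφ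
        (hk.strictMono_pow.injective.comp Subtype.val_injective)).exists_dist_lt
        ⟨_, hf.domRestrict⟩ hε
    refine ⟨_, aeval_pow_mem_convexHull k hQ, fun x hx => ?_⟩
    have := (ContinuousMap.dist_apply_le_dist ⟨x, hx⟩).trans_lt hQf
    rwa [aeval_continuousMap_apply_nnreal, dist_comm, Real.dist_eq] at this

theorem convexHull_powers_of_k_dense_iff_odd (a b : ℝ) (hab : a < b) (hb : b < -1)
    (k : ℕ) (hk : 0 < k) :
    (∀ f : ℝ → ℝ, ContinuousOn f (Set.Icc a b) → ∀ ε : ℝ, 0 < ε →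
      ∃ g ∈ convexHull ℝ (Set.range fun n : ℕ => fun x : ℝ => x ^ (k * n)),
        ∀ x ∈ Set.Icc a b, |g x - f x| < ε)
    ↔ Odd k :=
  convexHull_powers_of_k_dense_iff_odd_general a b hab hb k
end
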